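/- arXiv:2308.16168 — 3 statements merged into one kernel-verified Lean document; each statement's English description precedes it below -/
import Mathlib

section
/- If M is an exponential random variable with rate r > 0, c > 0, and k ≥ 1 is an integer, then E[ Σ_{j=0}^{k−1} (c e^{−x} M)^j e^{−c e^{−x} M} / j! ] = 1 − 1/(1 + (r/c) e^{x})^k for every real x. -/
open MeasureTheory Real Set Finset

lemma aux_integrable (n : ℕ) {b : ℝ} (hb : 0 < b) :
    IntegrableOn (fun m : ℝ => m ^ n * Real.exp (-(b * m))) (Ioi 0) := by
  apply integrable_of_isBigO_exp_neg (half_pos hb)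
  · exact (continuous_pow n).continuousOn.mul
      (Real.continuous_exp.comp (continuous_const.mul continuous_id).neg).continuousOn
  · have h := (isLittleO_pow_exp_pos_mul_atTop n (half_pos hb)).isBigO
    have h2 := h.mul (Asymptotics.isBigO_refl (fun m : ℝ => Real.exp (-(b * m))) Filter.atTop)
    refine h2.trans (Asymptotics.IsBigO.of_bound 1 ?_)
    filter_upwards with m
    have : Real.exp (b / 2 * m) * Real.exp (-(b * m)) = Real.exp (-(b / 2) * m) := by
      rw [← Real.exp_add]; ring_nf
    simp [this]

lemma aux_integral (n : ℕ) {b : ℝ} (hb : 0 < b) :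
    ∫ m in Ioi (0 : ℝ), m ^ n * Real.exp (-(b * m)) = n.factorial / b ^ (n + 1) := by
  have h := integral_rpow_mul_exp_neg_mul_Ioi (a := (n : ℝ) + 1) (by positivity) hb
  rw [Real.Gamma_nat_eq_factorial] at h
  rw [show ∫ m in Ioi (0 : ℝ), m ^ n * Real.exp (-(b * m))
      = ∫ m in Ioi (0 : ℝ), m ^ ((n : ℝ) + 1 - 1) * Real.exp (-(b * m)) from
    setIntegral_congr_fun measurableSet_Ioi fun m hm => by
      rw [show (n : ℝ) + 1 - 1 = (n : ℝ) by ring, Real.rpow_natCast], h]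
  rw [show ((n:ℝ)+1) = ((n+1 : ℕ) : ℝ) by push_cast; ring, Real.rpow_natCast]
  field_simp
  rw [← mul_pow, one_div_mul_cancel hb.ne', one_pow]

/-- For `M ∼ Exp(r)`, `c > 0`, and an integer `k ≥ 1`,
`E[ Σ_{j<k} (c e^{−x} M)^j e^{−c e^{−x} M}/j! ] = 1 − 1/(1+(r/c)e^{x})^k`. -/
theorem poisson_tail_mixture_exponential (r c : ℝ) (hr : 0 < r) (hc : 0 < c)
    (k : ℕ) (hk : 1 ≤ k) (x : ℝ) :
    (∫ m in Ioi (0 : ℝ),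
        (∑ j ∈ Finset.range k,
            (c * Real.exp (-x) * m) ^ j * Real.exp (-(c * Real.exp (-x) * m)) /
              (Nat.factorial j)) * (r * Real.exp (-(r * m)))) =
      1 - 1 / (1 + (r / c) * Real.exp x) ^ k := by
  set a : ℝ := c * Real.exp (-x) with ha_def
  have ha : 0 < a := by positivity
  set b : ℝ := a + r with hb_def
  have hb : 0 < b := by positivity
  have key : ∀ m : ℝ,
      (∑ j ∈ Finset.range k,
          (a * m) ^ j * Real.exp (-(a * m)) / (Nat.factorial j)) * (r * Real.exp (-(r * m)))
        = ∑ j ∈ Finset.range k,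
            (r * a ^ j / (Nat.factorial j)) * (m ^ j * Real.exp (-(b * m))) := by
    intro m
    rw [Finset.sum_mul]
    refine Finset.sum_congr rfl fun j _ => ?_
    have h1 : Real.exp (-(b * m)) = Real.exp (-(a * m)) * Real.exp (-(r * m)) := by
      rw [← Real.exp_add]; congr 1; rw [hb_def]; ring
    rw [h1, mul_pow]; ring
  simp_rw [key]
  rw [integral_finset_sum _ (fun j _ => ((aux_integrable j hb).const_mul _))]
  have hval : ∀ j ∈ Finset.range k,
      (∫ m in Ioi (0 : ℝ), (r * a ^ j / (Nat.factorial j)) * (m ^ j * Real.exp (-(b * m))))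
        = (r / b) * (a / b) ^ j := by
    intro j _
    rw [integral_const_mul, aux_integral j hb]
    have hfac : (Nat.factorial j : ℝ) ≠ 0 := Nat.cast_ne_zero.mpr j.factorial_ne_zero
    have hb0 : b ≠ 0 := hb.ne'
    field_simp
    rw [div_pow, pow_succ, mul_comm (b ^ j) b, mul_assoc, mul_div_assoc', mul_div_cancel_left₀ _ (pow_ne_zero j hb0), mul_comm]
  rw [Finset.sum_congr rfl hval, ← Finset.mul_sum]
  have hlt : a < b := by rw [hb_def]; linarith
  have hq : a / b ≠ 1 := ne_of_lt ((div_lt_one hb).mpr hlt)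
  have hab : a / b = 1 / (1 + (r / c) * Real.exp x) := by
    rw [ha_def, hb_def, ha_def, Real.exp_neg]
    have h1 := Real.exp_ne_zero x
    have h2 : c * (Real.exp x)⁻¹ + r ≠ 0 := by positivity
    field_simp
  have hrb : r / b = 1 - a / b := by
    rw [hb_def]; field_simp; ring
  rw [geom_sum_eq hq, hrb]
  have hgen : ∀ q : ℝ, q ≠ 1 → (1 - q) * ((q ^ k - 1) / (q - 1)) = 1 - q ^ k := by
    intro q hq1
    have h0 : q - 1 ≠ 0 := sub_ne_zero.mpr hq1
    field_simp
    ring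
  rw [hgen _ hq, hab, div_pow, one_pow]
end

section
/- Let β > 0, m > 1, and let g(u) = (1/(m−1)) e^{−βl}(e^{β(m−1)(u−l)} − 1) for u ≥ l and g(u) = 0 for u < l. Then g satisfies the renewal-type integral equation g(t) = (e^{−βl} − e^{−βt}) + mβ e^{−βt} ∫_0^t g(u) e^{βu} du for all t > l. -/
open Real MeasureTheory intervalIntegral

/-- The function `g(u) = (1/(m−1))e^{−βl}(e^{β(m−1)(u−l)} − 1)` for `u ≥ l`
(and `0` for `u < l`) satisfies the renewal integral equation
`g(t) = (e^{−βl} − e^{−βt}) + mβ e^{−βt} ∫_0^t g(u) e^{βu} du` for `t > l`. -/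
theorem interior_edge_mean_integral_equation (β m l : ℝ)
    (hβ : 0 < β) (hm : 1 < m) (hl : 0 ≤ l) (g : ℝ → ℝ)
    (hg : g = fun u => if l ≤ u then
      (1 / (m - 1)) * Real.exp (-β * l) * (Real.exp (β * (m - 1) * (u - l)) - 1)
      else 0) :
    ∀ t, l < t →
      g t = (Real.exp (-β * l) - Real.exp (-β * t)) +
        m * β * Real.exp (-β * t) * ∫ u in (0 : ℝ)..t, g u * Real.exp (β * u) := by
  intro t ht
  have hm1 : m - 1 ≠ 0 := by linarith
  have hβ' : β ≠ 0 := ne_of_gt hβ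
  set C : ℝ := (1 / (m - 1)) * Real.exp (-β * l) with hC
  -- g is continuous
  have hgc : Continuous g := by
    rw [hg]
    apply Continuous.if_le
    · fun_prop
    · fun_prop
    · exact continuous_const
    · exact continuous_id
    · intro x hx
      simp [← hx]
  have hint : ∀ a b : ℝ, IntervalIntegrable (fun u => g u * Real.exp (β * u)) volume a b :=
    fun a b => (hgc.mul (by fun_prop)).intervalIntegrable a b
  -- split the integral
  have hsplit : (∫ u in (0:ℝ)..t, g u * Real.exp (β * u))
      = (∫ u in (0:ℝ)..l, g u * Real.exp (β * u)) + ∫ u in l..t, g u * Real.exp (β * u) := by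
    rw [intervalIntegral.integral_add_adjacent_intervals (hint 0 l) (hint l t)]
  -- first part is zero
  have h0 : (∫ u in (0:ℝ)..l, g u * Real.exp (β * u)) = 0 := by
    have heq : (∫ u in (0:ℝ)..l, g u * Real.exp (β * u)) = ∫ _u in (0:ℝ)..l, (0:ℝ) := by
      apply intervalIntegral.integral_congr
      intro x hx
      rw [Set.uIcc_of_le hl] at hx
      rw [hg]
      simp only
      by_cases h : l ≤ x
      · have : x = l := le_antisymm hx.2 h
        simp [this, h]
      · simp [h]
    simpa using heq
  -- antiderivative
  have hF : ∀ u : ℝ, HasDerivAt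
      (fun x => C * (Real.exp (β*(m-1)*(x-l)) * Real.exp (β*x) / (β*m) - Real.exp (β*x)/β))
      (C * ((Real.exp (β*(m-1)*(u-l)) - 1) * Real.exp (β*u))) u := by
    intro u
    have h1 : HasDerivAt (fun x : ℝ => β*(m-1)*(x-l)) (β*(m-1)) u := by
      simpa using ((hasDerivAt_id u).sub_const l).const_mul (β*(m-1))
    have h2 : HasDerivAt (fun x : ℝ => β*x) β u := by
      simpa using (hasDerivAt_id u).const_mul β
    have e1 := h1.exp
    have e2 := h2.exp
    have hmul := e1.mul e2
    have hfinal := (((hmul.div_const (β*m)).sub (e2.div_const β)).const_mul C)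
    have hm0 : m ≠ 0 := by linarith
    refine hfinal.congr_deriv ?_
    field_simp
    ring
  have hcalc : (∫ u in l..t, g u * Real.exp (β * u))
      = (C * (Real.exp (β*(m-1)*(t-l)) * Real.exp (β*t) / (β*m) - Real.exp (β*t)/β))
        - (C * (Real.exp (β*(m-1)*(l-l)) * Real.exp (β*l) / (β*m) - Real.exp (β*l)/β)) := by
    have := intervalIntegral.integral_eq_sub_of_hasDerivAt (f := fun x => C * (Real.exp (β*(m-1)*(x-l)) * Real.exp (β*x) / (β*m) - Real.exp (β*x)/β))
      (f' := fun u => C * ((Real.exp (β*(m-1)*(u-l)) - 1) * Real.exp (β*u)))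
      (a := l) (b := t) (fun u _ => hF u)
      (by apply Continuous.intervalIntegrable; fun_prop)
    rw [← this]
    apply intervalIntegral.integral_congr
    intro x hx
    rw [Set.uIcc_of_le ht.le] at hx
    rw [hg]
    simp only [if_pos hx.1]
    ring
  rw [hsplit, h0, hcalc, zero_add, hg]
  simp only [if_pos ht.le]
  have hE1 : Real.exp (-β*t) = (Real.exp (β*t))⁻¹ := by
    rw [show -β*t = -(β*t) by ring, Real.exp_neg]
  have hE2 : Real.exp (-β*l) = (Real.exp (β*l))⁻¹ := by
    rw [show -β*l = -(β*l) by ring, Real.exp_neg]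
  rw [hC]
  simp only [sub_self, mul_zero, Real.exp_zero]
  rw [hE1, hE2]
  have hm0 : (m:ℝ) ≠ 0 := by linarith
  field_simp
  ring
end

section
/- Let β > 0, m > 1, v ≥ m, l ≥ 0, and define m̂(t) = (1/(m−1))e^{−βl}(e^{β(m−1)(t−l)} − 1) for t ≥ l (and 0 otherwise). Then for all t ≥ l, e^{β(m−1)t}[ βe^{−βml}∫_l^t e^{−β(m−1)(s−l)}ds + 2βm e^{−βl}∫_l^t e^{−β(m−1)s} m̂(s−l) ds + β(v−m)∫_l^t e^{−β(m−1)s} m̂(s)² ds ] ≤ (1/(m−1)) e^{−β(ml−(m−1)t)} [ 1 + 2βm(t−l)e^{−βml} + ((v−m)/(m−1)²) e^{−β(ml−(m−1)t)} ]. -/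
open Real MeasureTheory intervalIntegral

lemma exp_add_eq (x y w : ℝ) (h : x + y = w) :
    Real.exp x * Real.exp y = Real.exp w := by rw [← Real.exp_add, h]

lemma div_neg_helper (A x y z : ℝ) (hA : A ≠ 0) :
    z * ((x - y) / (-A)) = (z * y - z * x) / A := by
  rw [div_neg]
  ring

lemma int_exp_mul (c : ℝ) (hc : c ≠ 0) (a b : ℝ) :
    ∫ s in a..b, Real.exp (c * s) = (Real.exp (c * b) - Real.exp (c * a)) / c := by
  have h : ∀ x ∈ Set.uIcc a b, HasDerivAt (fun s => Real.exp (c * s) / c)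
      (Real.exp (c * x)) x := by
    intro x _
    have h1 : HasDerivAt (fun s : ℝ => c * s) c x := by
      simpa using (hasDerivAt_id x).const_mul c
    have h2 := (Real.hasDerivAt_exp (c * x)).comp x h1
    have h3 := h2.div_const c
    simpa [mul_div_cancel_right₀ _ hc] using h3
  have hint : IntervalIntegrable (fun s => Real.exp (c * s)) volume a b :=
    (Real.continuous_exp.comp (continuous_const.mul continuous_id)).intervalIntegrable a b
  have := intervalIntegral.integral_eq_sub_of_hasDerivAt h hint
  rw [this]; ring

/-- Second-moment upper bound for long interior edges: with
`m̂(t) = (1/(m−1))e^{−βl}(e^{β(m−1)(t−l)} − 1)` for `t ≥ l` and `0` otherwise,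
the explicit variation-of-constants expression for the second moment is bounded
by `(1/(m−1))e^{−β(ml−(m−1)t)}[1 + 2βm(t−l)e^{−βml} + ((v−m)/(m−1)²)e^{−β(ml−(m−1)t)}]`. -/
theorem second_moment_upper_bound (β m v l : ℝ)
    (hβ : 0 < β) (hm : 1 < m) (hv : m ≤ v) (hl : 0 ≤ l)
    (mhat : ℝ → ℝ)
    (hmhat : ∀ u, mhat u = if l ≤ u then
      (1 / (m - 1)) * Real.exp (-β * l) * (Real.exp (β * (m - 1) * (u - l)) - 1)
      else 0) :
    ∀ t, l ≤ t →
      Real.exp (β * (m - 1) * t) *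
        ((β * Real.exp (-β * m * l) *
            ∫ s in l..t, Real.exp (-β * (m - 1) * (s - l))) +
          (2 * β * m * Real.exp (-β * l) *
            ∫ s in l..t, Real.exp (-β * (m - 1) * s) * mhat (s - l)) +
          (β * (v - m) *
            ∫ s in l..t, Real.exp (-β * (m - 1) * s) * (mhat s) ^ 2))
      ≤ (1 / (m - 1)) * Real.exp (-β * (m * l - (m - 1) * t)) *
          (1 + 2 * β * m * (t - l) * Real.exp (-β * m * l) +
            ((v - m) / (m - 1) ^ 2) *
              Real.exp (-β * (m * l - (m - 1) * t))) := by
  intro t ht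
  have hm1 : (0:ℝ) < m - 1 := by linarith
  have hvm : (0:ℝ) ≤ v - m := by linarith
  set A := β * (m - 1) with hA
  have hApos : 0 < A := mul_pos hβ hm1
  have hA' : A ≠ 0 := ne_of_gt hApos
  -- continuity and nonnegativity of mhat
  have hcont : Continuous mhat := by
    have hf : mhat = fun u => if l ≤ u then
        (1 / (m - 1)) * Real.exp (-β * l) * (Real.exp (β * (m - 1) * (u - l)) - 1) else 0 :=
      funext hmhat
    rw [hf]
    apply Continuous.if_le
    · fun_prop
    · exact continuous_const
    · exact continuous_const
    · exact continuous_id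
    · intro x hx; simp [← hx]
  have hmnn : ∀ u, 0 ≤ mhat u := by
    intro u
    rw [hmhat u]
    split_ifs with h
    · have h1 : (1:ℝ) ≤ Real.exp (A * (u - l)) := by
        apply Real.one_le_exp
        have : 0 ≤ u - l := by linarith
        positivity
      have h3 : (0:ℝ) < Real.exp (-β * l) := Real.exp_pos _
      have h2 : (0:ℝ) < 1 / (m - 1) := by positivity
      exact mul_nonneg (mul_nonneg h2.le h3.le) (by linarith)
    · exact le_refl 0
  -- key abbreviations
  set P := Real.exp (-β * m * l) with hP
  set Q := Real.exp (A * t) with hQ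
  set R := Real.exp (A * l) with hR
  set X := Real.exp (-(A * (t - l))) with hX
  have hPpos : 0 < P := Real.exp_pos _
  have hQpos : 0 < Q := Real.exp_pos _
  have hRpos : 0 < R := Real.exp_pos _
  have hXpos : 0 < X := Real.exp_pos _
  -- Integral 1 exactly
  have hI1 : (∫ s in l..t, Real.exp (-β * (m - 1) * (s - l))) = (1 - X) / A := by
    have hrw : ∀ s : ℝ, Real.exp (-β * (m - 1) * (s - l))
        = Real.exp (A * l) * Real.exp ((-A) * s) := by
      intro s; rw [← Real.exp_add]; congr 1; rw [hA]; ring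
    simp_rw [hrw]
    rw [intervalIntegral.integral_const_mul, int_exp_mul (-A) (by simpa using hA') l t]
    have e1 : Real.exp (A * l) * Real.exp (-A * t) = X := by
      rw [hX]; exact exp_add_eq _ _ _ (by ring)
    have e2 : Real.exp (A * l) * Real.exp (-A * l) = 1 := by
      rw [exp_add_eq (A * l) (-A * l) 0 (by ring), Real.exp_zero]
    rw [div_neg_helper A _ _ _ hA', e1, e2]
  -- integrability
  have hc2 : Continuous (fun s : ℝ => Real.exp (-β * (m - 1) * s) * mhat (s - l)) := by
    fun_prop
  have hc3 : Continuous (fun s : ℝ => Real.exp (-β * (m - 1) * s) * (mhat s) ^ 2) := by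
    fun_prop
  -- pointwise bound 2
  have hB2 : ∀ s ∈ Set.Icc l t, Real.exp (-β * (m - 1) * s) * mhat (s - l)
      ≤ (1 / (m - 1)) * Real.exp (β * l - 2 * β * m * l) := by
    intro s _
    rw [hmhat (s - l)]
    split_ifs with h
    · have hE1 : (0:ℝ) < Real.exp (A * (s - l - l)) := Real.exp_pos _
      calc Real.exp (-β * (m - 1) * s) *
            (1 / (m - 1) * Real.exp (-β * l) * (Real.exp (A * (s - l - l)) - 1))
          ≤ Real.exp (-β * (m - 1) * s) *
            (1 / (m - 1) * Real.exp (-β * l) * Real.exp (A * (s - l - l))) := by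
            gcongr
            linarith
        _ = (1 / (m - 1)) * (Real.exp (-β * (m - 1) * s) * Real.exp (-β * l)
              * Real.exp (A * (s - l - l))) := by ring
        _ = (1 / (m - 1)) * Real.exp (β * l - 2 * β * m * l) := by
            rw [exp_add_eq (-β * (m - 1) * s) (-β * l) (-β * (m - 1) * s + -β * l) rfl,
              exp_add_eq _ _ (β * l - 2 * β * m * l) (by rw [hA]; ring)]
    · have : 0 ≤ (1 / (m - 1)) * Real.exp (β * l - 2 * β * m * l) := by positivity
      simpa using this
  -- pointwise bound 3
  have hB3 : ∀ s ∈ Set.Icc l t, Real.exp (-β * (m - 1) * s) * (mhat s) ^ 2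
      ≤ (1 / (m - 1)) ^ 2 * Real.exp (-(2 * β * m * l)) * Real.exp (A * s) := by
    intro s hs
    rw [hmhat s]
    rw [if_pos hs.1]
    have hE1 : (1:ℝ) ≤ Real.exp (A * (s - l)) := by
      apply Real.one_le_exp
      have : 0 ≤ s - l := by linarith [hs.1]
      positivity
    have hb : 0 ≤ 1 / (m - 1) * Real.exp (-β * l) * (Real.exp (A * (s - l)) - 1) := by
      have h2 : (0:ℝ) < 1 / (m - 1) := by positivity
      have h3 : (0:ℝ) < Real.exp (-β * l) := Real.exp_pos _
      exact mul_nonneg (mul_nonneg h2.le h3.le) (by linarith)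
    calc Real.exp (-β * (m - 1) * s) *
          (1 / (m - 1) * Real.exp (-β * l) * (Real.exp (A * (s - l)) - 1)) ^ 2
        ≤ Real.exp (-β * (m - 1) * s) *
          (1 / (m - 1) * Real.exp (-β * l) * Real.exp (A * (s - l))) ^ 2 := by
          gcongr
          · linarith
      _ = (1 / (m - 1)) ^ 2 * (Real.exp (-β * (m - 1) * s) * Real.exp (-β * l)
            * Real.exp (-β * l) * Real.exp (A * (s - l)) * Real.exp (A * (s - l))) := by ring
      _ = (1 / (m - 1)) ^ 2 * (Real.exp (-(2 * β * m * l)) * Real.exp (A * s)) := by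
          rw [exp_add_eq (-β * (m - 1) * s) (-β * l) _ rfl,
            exp_add_eq _ (-β * l) _ rfl,
            exp_add_eq _ (A * (s - l)) _ rfl,
            exp_add_eq _ (A * (s - l)) (-(2 * β * m * l) + A * s) (by rw [hA]; ring),
            Real.exp_add]
      _ = (1 / (m - 1)) ^ 2 * Real.exp (-(2 * β * m * l)) * Real.exp (A * s) := by ring
  -- integral bounds
  have hInt2 : (∫ s in l..t, Real.exp (-β * (m - 1) * s) * mhat (s - l))
      ≤ (t - l) * ((1 / (m - 1)) * Real.exp (β * l - 2 * β * m * l)) := by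
    have := intervalIntegral.integral_mono_on (μ := volume) ht (hc2.intervalIntegrable l t)
      (intervalIntegrable_const) hB2
    rwa [intervalIntegral.integral_const, smul_eq_mul] at this
  have hInt3 : (∫ s in l..t, Real.exp (-β * (m - 1) * s) * (mhat s) ^ 2)
      ≤ ((1 / (m - 1)) ^ 2 * Real.exp (-(2 * β * m * l))) * ((Q - R) / A) := by
    have hgc : Continuous (fun s : ℝ =>
        (1 / (m - 1)) ^ 2 * Real.exp (-(2 * β * m * l)) * Real.exp (A * s)) := by fun_prop
    have hmono := intervalIntegral.integral_mono_on (μ := volume) ht (hc3.intervalIntegrable l t)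
      (hgc.intervalIntegrable l t) hB3
    have hval : (∫ s in l..t, (1 / (m - 1)) ^ 2 * Real.exp (-(2 * β * m * l))
        * Real.exp (A * s))
        = ((1 / (m - 1)) ^ 2 * Real.exp (-(2 * β * m * l))) * ((Q - R) / A) := by
      rw [intervalIntegral.integral_const_mul, int_exp_mul A hA' l t]
    rw [hval] at hmono
    exact hmono
  -- rewrite RHS exponential
  have hE : Real.exp (-β * (m * l - (m - 1) * t)) = P * Q := by
    rw [hP, hQ, exp_add_eq (-β * m * l) (A * t) (-β * (m * l - (m - 1) * t)) (by rw [hA]; ring)]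
  -- assemble
  rw [hI1, hE]
  have hexp2 : Real.exp (-β * l) * Real.exp (β * l - 2 * β * m * l) = P * P := by
    rw [hP, exp_add_eq (-β * l) (β * l - 2 * β * m * l) (-β * m * l + -β * m * l) (by ring),
      Real.exp_add]
  have hexp3 : Real.exp (-(2 * β * m * l)) = P * P := by
    rw [hP, ← Real.exp_add]
    congr 1
    ring
  calc Q * (β * P * ((1 - X) / A)
        + 2 * β * m * Real.exp (-β * l)
            * (∫ s in l..t, Real.exp (-β * (m - 1) * s) * mhat (s - l))
        + β * (v - m) * (∫ s in l..t, Real.exp (-β * (m - 1) * s) * (mhat s) ^ 2))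
      ≤ Q * (β * P * ((1 - X) / A)
        + 2 * β * m * Real.exp (-β * l)
            * ((t - l) * ((1 / (m - 1)) * Real.exp (β * l - 2 * β * m * l)))
        + β * (v - m) * (((1 / (m - 1)) ^ 2 * Real.exp (-(2 * β * m * l))) * ((Q - R) / A))) := by
        gcongr <;> first | exact hInt2 | exact hInt3
    _ = Q * (β * P * ((1 - X) / A)
        + 2 * β * m * (t - l) * (1 / (m - 1)) * (P * P)
        + β * (v - m) * (1 / (m - 1)) ^ 2 * (P * P) * ((Q - R) / A)) := by
        rw [show 2 * β * m * Real.exp (-β * l)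
              * ((t - l) * ((1 / (m - 1)) * Real.exp (β * l - 2 * β * m * l)))
            = 2 * β * m * (t - l) * (1 / (m - 1))
              * (Real.exp (-β * l) * Real.exp (β * l - 2 * β * m * l)) from by ring,
          hexp2, hexp3]
        ring
    _ ≤ 1 / (m - 1) * (P * Q) * (1 + 2 * β * m * (t - l) * P + (v - m) / (m - 1) ^ 2 * (P * Q)) := by
        have hdiff : 1 / (m - 1) * (P * Q) * (1 + 2 * β * m * (t - l) * P
              + (v - m) / (m - 1) ^ 2 * (P * Q))
            - Q * (β * P * ((1 - X) / A)
              + 2 * β * m * (t - l) * (1 / (m - 1)) * (P * P)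
              + β * (v - m) * (1 / (m - 1)) ^ 2 * (P * P) * ((Q - R) / A))
            = Q * ((1 / (m - 1)) * P * X + ((v - m) / (m - 1) ^ 3) * (P * P) * R) := by
          have hne1 : (m - 1) ≠ 0 := ne_of_gt hm1
          have hne2 : β ≠ 0 := ne_of_gt hβ
          rw [hA]
          field_simp
          ring
        have hpos : 0 ≤ Q * ((1 / (m - 1)) * P * X + ((v - m) / (m - 1) ^ 3) * (P * P) * R) := by
          apply mul_nonneg hQpos.le
          apply add_nonneg
          · positivity
          · apply mul_nonneg (mul_nonneg _ (by positivity)) hRpos.le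
            apply div_nonneg hvm
            positivity
        linarith
end
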